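/- Let V be an N×M complex matrix, let l : {1,…,N} → {1,…,M} be any function (repetitions allowed), and let x be a real number. Then Σ_{σ_1,σ_2 ∈ S_N} x^{N − fix(σ_1σ_2^{-1})} ∏_{k=1}^{N} conj(V_{σ_1(k), l(k)}) · V_{σ_2(k), l(k)} = Σ_{n=0}^{N} x^n (1−x)^{N−n} Σ_{K} Σ_{J} |per V(K | l(J))|² · per W(K^c | J^c), where K and J range over all n-element subsets of {1,…,N}, V(K | l(J)) is the n×n matrix with rows k ∈ K and columns l(j) for j ∈ J, W is the N×N real matrix with entries W_{i,j} = |V_{i, l(j)}|², and W(K^c|J^c) is its submatrix on rows K^c and columns J^c. -/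

import Mathlib

open Finset

/-- Permanent of the submatrix of `A` on the row set `K` and the column set `J`:
the sum over all bijections `e : K ≃ J` of `∏_{i ∈ K} A i (e i)`.
When `K.card = J.card = n` this is exactly the permanent of the `n × n` submatrix
`A(K|J)`; for `K = J = ∅` it equals `1` (the permanent of the empty matrix). -/
noncomputable def permOn {α β R : Type*} [DecidableEq α] [DecidableEq β] [CommRing R]
    (A : α → β → R) (K : Finset α) (J : Finset β) : R :=
  ∑ e : {x // x ∈ K} ≃ {y // y ∈ J}, ∏ i : {x // x ∈ K}, A i (e i)

/-- The number of fixed points of a permutation. -/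
def fixCount {N : ℕ} (σ : Equiv.Perm (Fin N)) : ℕ :=
  (Finset.univ.filter fun i => σ i = i).card

/-! With `c_k = conj V(σ₁ k, l k) * V(σ₂ k, l k)`, which is `|V(σ₁ k, l k)|²` when `σ₁ k = σ₂ k`,
write `x^[σ₁ k ≠ σ₂ k] c_k = x c_k + (1 - x) [σ₁ k = σ₂ k] c_k` and expand the product over `k`
into a sum over the set `J` of positions that carry the factor `x`. For fixed `J` only pairs with
`σ₁ = σ₂` off `J` contribute, that is `σ₂ = σ₁ ∘ π` with `π` a permutation of `J`. Splitting `σ₁`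
into bijections `J ≃ K` and `Jᶜ ≃ Kᶜ`, where `K = σ₁ J`, the double sum over `σ₁, σ₂` factors into
`conj (per V(K|l(J))) * per V(K|l(J)) * per W(Kᶜ|Jᶜ)`. -/

section PermSplitting

variable {α : Type*}

lemma map_perm_eq_iff {J K : Finset α} {σ : Equiv.Perm α} :
    J.map σ.toEmbedding = K ↔ ∀ a, a ∈ J ↔ σ a ∈ K := by
  refine ⟨fun h a => by rw [← h, mem_map_equiv, Equiv.symm_apply_apply], fun h => ?_⟩
  ext b
  rw [mem_map_equiv, h, Equiv.apply_symm_apply]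

variable [DecidableEq α] {R : Type*} [CommRing R]

theorem permOn_swap {β : Type*} [DecidableEq β] (A : α → β → R) (K : Finset α) (J : Finset β) :
    permOn (fun j i => A i j) J K = permOn A K J :=
  Fintype.sum_equiv (Equiv.symmEquiv J K) _ _ fun e => by
    simpa using (e.symm.prod_comp fun j => A (e j) j).symm

theorem RingHom.map_permOn {β S : Type*} [DecidableEq β] [CommRing S] (f : R →+* S)
    (A : α → β → R) (K : Finset α) (J : Finset β) :
    f (permOn A K J) = permOn (fun i j => f (A i j)) K J := by
  simp [permOn, map_sum, map_prod]

theorem sum_perm_prod_equiv_comp_eq_permOn {J K : Finset α} (e : J ≃ K) (A : α → α → R) :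
    ∑ π : Equiv.Perm J, ∏ k : J, A k (e (π k)) = permOn A J K :=
  Fintype.sum_equiv ((Equiv.refl J).equivCongr e) _ _ fun _ => rfl

variable [Fintype α]

def subtypeNotMemEquivCompl (S : Finset α) : {x // x ∉ S} ≃ ↥Sᶜ :=
  Equiv.subtypeEquivRight fun _ => mem_compl.symm

def permOfEquivs {J K : Finset α} (e₁ : J ≃ K) (e₀ : ↥Jᶜ ≃ ↥Kᶜ) : Equiv.Perm α :=
  Equiv.subtypeCongr e₁
    ((subtypeNotMemEquivCompl J).trans (e₀.trans (subtypeNotMemEquivCompl K).symm))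

section

variable {J K : Finset α} (e₁ : J ≃ K) (e₀ : ↥Jᶜ ≃ ↥Kᶜ)

@[simp]
lemma permOfEquivs_apply_coe (k : J) : permOfEquivs e₁ e₀ k = e₁ k := by
  simp [permOfEquivs, Equiv.subtypeCongr, Equiv.sumCompl_symm_apply_of_pos k.2]

@[simp]
lemma permOfEquivs_apply_coe_compl (k : ↥Jᶜ) : permOfEquivs e₁ e₀ k = e₀ k := by
  simp only [permOfEquivs, Equiv.subtypeCongr, Equiv.trans_apply, Equiv.sumCongr_apply,
    Equiv.sumCompl_symm_apply_of_neg (mem_compl.mp k.2), Sum.map_inr, Equiv.sumCompl_apply_inr]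
  rfl

lemma map_permOfEquivs : J.map (permOfEquivs e₁ e₀).toEmbedding = K := by
  refine map_perm_eq_iff.mpr fun a => ?_
  by_cases ha : a ∈ J
  · have h := permOfEquivs_apply_coe e₁ e₀ ⟨a, ha⟩
    exact iff_of_true ha (h ▸ (e₁ _).2)
  · have h := permOfEquivs_apply_coe_compl e₁ e₀ ⟨a, mem_compl.mpr ha⟩
    exact iff_of_false ha (mem_compl.mp (h ▸ (e₀ _).2))

end

theorem sum_perm_eq_sum_powersetCard_sum_equiv {M : Type*} [AddCommMonoid M] (J : Finset α)
    (F : Equiv.Perm α → M) :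
    ∑ σ, F σ = ∑ K ∈ powersetCard #J univ, ∑ e₁ : J ≃ K, ∑ e₀ : ↥Jᶜ ≃ ↥Kᶜ,
      F (permOfEquivs e₁ e₀) := by
  rw [← sum_fiberwise_of_maps_to (g := fun σ : Equiv.Perm α => J.map σ.toEmbedding)
    (t := powersetCard #J univ) (by simp)]
  refine sum_congr rfl fun K _ => ?_
  rw [← Fintype.sum_prod_type']
  have hcompl {σ : Equiv.Perm α} (h : ∀ a, a ∈ J ↔ σ a ∈ K) (a : α) : a ∈ Jᶜ ↔ σ a ∈ Kᶜ := by
    simp [h]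
  have hglue {σ : Equiv.Perm α} (h : ∀ a, a ∈ J ↔ σ a ∈ K) :
      permOfEquivs (σ.subtypeEquiv h) (σ.subtypeEquiv (hcompl h)) = σ := by
    ext a
    by_cases ha : a ∈ J
    · exact permOfEquivs_apply_coe _ _ ⟨a, ha⟩
    · exact permOfEquivs_apply_coe_compl _ _ ⟨a, mem_compl.mpr ha⟩
  have hfiber {σ : Equiv.Perm α} (hσ : σ ∈ univ.filter fun σ : Equiv.Perm α => J.map σ.toEmbedding = K) :
      ∀ a, a ∈ J ↔ σ a ∈ K :=
    map_perm_eq_iff.mp (mem_filter.mp hσ).2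
  refine sum_bij' (fun σ hσ => (σ.subtypeEquiv (hfiber hσ), σ.subtypeEquiv (hcompl (hfiber hσ))))
    (fun e _ => permOfEquivs e.1 e.2) (by simp) (fun e _ => by simp [map_permOfEquivs e.1 e.2])
    (fun σ hσ => hglue (hfiber hσ)) (fun e _ => by ext <;> simp) (fun σ hσ => by rw [hglue])

theorem sum_perm_prod_compl_ite_mul_eq (J : Finset α) (σ : Equiv.Perm α) (u : α → R)
    (G : Equiv.Perm α → R) :
    ∑ τ, (∏ k ∈ Jᶜ, if σ k = τ k then u k else 0) * G τ
      = (∏ k ∈ Jᶜ, u k) * ∑ π : Equiv.Perm J, G (σ * Equiv.Perm.ofSubtype π) := by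
  have hfix (ρ : Equiv.Perm α) : (∀ k ∈ Jᶜ, σ k = (σ * ρ) k) ↔ ∀ k, k ∉ J → ρ k = k := by
    simp [eq_comm]
  simp_rw [prod_ite_zero, ite_mul, zero_mul, mul_sum]
  rw [← Equiv.sum_comp (Equiv.mulLeft σ)]
  simp only [Equiv.coe_mulLeft, hfix]
  rw [← sum_filter, sum_subtype _ (p := fun ρ : Equiv.Perm α => ∀ k, k ∉ J → ρ k = k) (by simp),
    ← (Equiv.Perm.subtypeEquivSubtypePerm (· ∈ J)).sum_comp]
  rfl

theorem sum_sum_prod_mul_prod_compl_ite_eq (J : Finset α) (a b : α → α → R) :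
    ∑ σ : Equiv.Perm α, ∑ τ : Equiv.Perm α,
        (∏ k ∈ J, a k (σ k) * b k (τ k)) *
          ∏ k ∈ Jᶜ, (if σ k = τ k then a k (σ k) * b k (τ k) else 0)
      = ∑ K ∈ powersetCard #J univ,
          permOn a J K * permOn b J K * permOn (fun k i => a k i * b k i) Jᶜ Kᶜ := by
  calc _ = ∑ σ : Equiv.Perm α, (∏ k ∈ J, a k (σ k)) * ((∏ k ∈ Jᶜ, a k (σ k) * b k (σ k)) *
        ∑ π : Equiv.Perm J, ∏ k ∈ J, b k ((σ * Equiv.Perm.ofSubtype π) k)) := by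
        refine sum_congr rfl fun σ _ => ?_
        rw [← sum_perm_prod_compl_ite_mul_eq J σ (fun k => a k (σ k) * b k (σ k))
          (fun τ => ∏ k ∈ J, b k (τ k)), mul_sum]
        refine sum_congr rfl fun τ _ => ?_
        have hdiag : ∀ k ∈ Jᶜ, (if σ k = τ k then a k (σ k) * b k (τ k) else 0)
            = if σ k = τ k then a k (σ k) * b k (σ k) else 0 := by
          intro k _
          split_ifs with h <;> simp [h]
        rw [prod_congr rfl hdiag, prod_mul_distrib]
        ring
    _ = ∑ K ∈ powersetCard #J univ, ∑ e₁ : J ≃ K, ∑ e₀ : ↥Jᶜ ≃ ↥Kᶜ,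
          (∏ k : J, a k (e₁ k)) * ((∏ k : ↥Jᶜ, a k (e₀ k) * b k (e₀ k)) * permOn b J K) := by
        rw [sum_perm_eq_sum_powersetCard_sum_equiv J]
        refine sum_congr rfl fun K _ => sum_congr rfl fun e₁ _ => sum_congr rfl fun e₀ _ => ?_
        simp_rw [← prod_coe_sort J, ← prod_coe_sort Jᶜ, Equiv.Perm.mul_apply,
          Equiv.Perm.ofSubtype_apply_coe, permOfEquivs_apply_coe, permOfEquivs_apply_coe_compl,
          sum_perm_prod_equiv_comp_eq_permOn]
    _ = _ := by
        refine sum_congr rfl fun K _ => ?_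
        simp_rw [← mul_sum, ← sum_mul, permOn]
        ring

theorem prod_ite_one_mul_eq_sum (p : α → Prop) [DecidablePred p] (x : R) (c : α → R) :
    ∏ k, (if p k then 1 else x) * c k
      = ∑ J : Finset α, x ^ #J * (1 - x) ^ #Jᶜ *
          ((∏ k ∈ J, c k) * ∏ k ∈ Jᶜ, if p k then c k else 0) := by
  have hsplit (k : α) : (if p k then 1 else x) * c k
      = x * c k + (1 - x) * if p k then c k else 0 := by
    split_ifs <;> ring
  simp_rw [hsplit, Fintype.prod_add, prod_mul_distrib, prod_const]
  exact sum_congr rfl fun _ _ => by ring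

end PermSplitting

lemma fixCount_mul_inv {N : ℕ} (σ τ : Equiv.Perm (Fin N)) :
    fixCount (σ * τ⁻¹) = #{k | σ k = τ k} :=
  card_equiv τ.symm fun i => by simp [Equiv.Perm.inv_def, eq_comm]

lemma pow_sub_fixCount_mul_inv {R : Type*} [CommMonoid R] {N : ℕ} (σ τ : Equiv.Perm (Fin N))
    (x : R) : x ^ (N - fixCount (σ * τ⁻¹)) = ∏ k, if σ k = τ k then 1 else x := by
  rw [prod_ite, prod_const_one, one_mul, prod_const, fixCount_mul_inv, ← compl_filter,
    card_compl, Fintype.card_fin]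

theorem permOn_conj_mul_permOn_mul_permOn_conj_mul {α β : Type*} [DecidableEq α] [DecidableEq β]
    [Fintype α] [Fintype β] (A : α → β → ℂ) (K : Finset α) (J : Finset β) :
    permOn (fun j i => (starRingEnd ℂ) (A i j)) J K * permOn (fun j i => A i j) J K *
        permOn (fun j i => (starRingEnd ℂ) (A i j) * A i j) Jᶜ Kᶜ
      = ((‖permOn A K J‖ ^ 2 * permOn (fun i j => ‖A i j‖ ^ 2) Kᶜ Jᶜ : ℝ) : ℂ) := by
  have hconj : permOn (fun i j => (starRingEnd ℂ) (A i j)) K J = (starRingEnd ℂ) (permOn A K J) :=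
    (RingHom.map_permOn _ A K J).symm
  have hnormSq : permOn (fun i j => (starRingEnd ℂ) (A i j) * A i j) Kᶜ Jᶜ
      = ((permOn (fun i j => ‖A i j‖ ^ 2) Kᶜ Jᶜ : ℝ) : ℂ) := by
    rw [← Complex.ofRealHom_eq_coe, RingHom.map_permOn]
    simp_rw [Complex.conj_mul', Complex.ofRealHom_eq_coe, Complex.ofReal_pow]
  rw [permOn_swap (fun i j => (starRingEnd ℂ) (A i j)), permOn_swap A,
    permOn_swap (fun i j => (starRingEnd ℂ) (A i j) * A i j), hconj, hnormSq, Complex.conj_mul']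
  push_cast
  ring
/-- **Output probability with distinguishability function `J(σ) = x^{N-fix(σ)}` as a
binomial mixture of quantum and classical probabilities.**
For an `N × M` complex matrix `V`, any `l : {1,…,N} → {1,…,M}` and any real `x`,
`Σ_{σ₁,σ₂ ∈ S_N} x^{N-fix(σ₁σ₂⁻¹)} ∏_k conj(V_{σ₁(k),l(k)}) V_{σ₂(k),l(k)}
 = Σ_{n=0}^{N} xⁿ(1-x)^{N-n} Σ_{K,J : |K|=|J|=n} |per V(K|l(J))|² · per W(Kᶜ|Jᶜ)`,
where `W i j = |V_{i,l(j)}|²`. -/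
theorem partial_distinguishability_binomial_mixture (N M : ℕ)
    (V : Matrix (Fin N) (Fin M) ℂ) (l : Fin N → Fin M) (x : ℝ) :
    ∑ σ₁ : Equiv.Perm (Fin N), ∑ σ₂ : Equiv.Perm (Fin N),
        (x : ℂ) ^ (N - fixCount (σ₁ * σ₂⁻¹)) *
          ∏ k : Fin N, (starRingEnd ℂ) (V (σ₁ k) (l k)) * V (σ₂ k) (l k) =
      ∑ n ∈ Finset.range (N + 1),
        (x : ℂ) ^ n * (1 - (x : ℂ)) ^ (N - n) *
          ∑ K ∈ Finset.powersetCard n (Finset.univ : Finset (Fin N)),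
            ∑ J ∈ Finset.powersetCard n (Finset.univ : Finset (Fin N)),
              ((‖permOn (fun i j => V i (l j)) K J‖ ^ 2 *
                permOn (fun i j => ‖V i (l j)‖ ^ 2) Kᶜ Jᶜ : ℝ) : ℂ) := by
  calc _ = ∑ σ₁ : Equiv.Perm (Fin N), ∑ σ₂ : Equiv.Perm (Fin N), ∑ J : Finset (Fin N),
          (x : ℂ) ^ #J * (1 - (x : ℂ)) ^ (N - #J) *
            ((∏ k ∈ J, (starRingEnd ℂ) (V (σ₁ k) (l k)) * V (σ₂ k) (l k)) *
              ∏ k ∈ Jᶜ, if σ₁ k = σ₂ k then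
                (starRingEnd ℂ) (V (σ₁ k) (l k)) * V (σ₂ k) (l k) else 0) := by
        simp_rw [pow_sub_fixCount_mul_inv, ← prod_mul_distrib, prod_ite_one_mul_eq_sum, card_compl,
          Fintype.card_fin]
    _ = ∑ J : Finset (Fin N), (x : ℂ) ^ #J * (1 - (x : ℂ)) ^ (N - #J) *
          ∑ K ∈ powersetCard #J univ, ((‖permOn (fun i j => V i (l j)) K J‖ ^ 2 *
            permOn (fun i j => ‖V i (l j)‖ ^ 2) Kᶜ Jᶜ : ℝ) : ℂ) := by
        rw [sum_congr rfl fun σ₁ _ => sum_comm, sum_comm]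
        simp_rw [← mul_sum]
        refine sum_congr rfl fun J _ => congr_arg _ ?_
        rw [sum_sum_prod_mul_prod_compl_ite_eq J (fun k i => (starRingEnd ℂ) (V i (l k)))
          (fun k i => V i (l k))]
        exact sum_congr rfl fun K _ =>
          permOn_conj_mul_permOn_mul_permOn_conj_mul (fun i j => V i (l j)) K J
    _ = _ := by
        rw [← powerset_univ, sum_powerset, card_univ, Fintype.card_fin]
        refine sum_congr rfl fun n _ => ?_
        rw [sum_congr rfl fun J hJ => by rw [mem_powersetCard_univ.mp hJ], ← mul_sum, sum_comm]
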